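/- Let m = (ξ_A, ξ_B) be a compatible net counter-clockwise motion from P₀ = (A₀,B₀) to P₁ = (A₁,B₁) with traces C_A = ξ_A([0,1]), C_B = ξ_B([0,1]), satisfying: (Convexity) ℓ(ξ_A) = ∫₀^{2π} h_{C_A}(θ) dθ − ‖A₁ − A₀‖ and ℓ(ξ_B) = ∫₀^{2π} h_{C_B}(θ) dθ − ‖B₁ − B₀‖; and (Minimality) for every compatible net counter-clockwise motion m' = (ξ'_A, ξ'_B) from P₀ to P₁ with traces C'_A, C'_B one has ∫₀^{2π} (h_{C_A}(θ) + h_{C_B}(θ)) dθ ≤ ∫₀^{2π} (h_{C'_A}(θ) + h_{C'_B}(θ)) dθ. Then ℓ(m) ≤ ℓ(m') for every compatible net counter-clockwise motion m' from P₀ to P₁. -/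

import Mathlib

open Set Real RealInnerProductSpace

noncomputable section

/-- The Euclidean plane ℝ². -/
abbrev Plane := EuclideanSpace ℝ (Fin 2)

/-- Unit vector at angle `θ`. -/
def uvec (θ : ℝ) : Plane := WithLp.toLp 2 ![Real.cos θ, Real.sin θ]

/-- Support function of a set `C ⊆ ℝ²` at angle `θ`. -/
def supp (C : Set Plane) (θ : ℝ) : ℝ := sSup ((fun x => ⟪x, uvec θ⟫) '' C)

/-- Length of a curve: its total variation on `[0,1]`. -/
def plen (ξ : ℝ → Plane) : ℝ := (eVariationOn ξ (Icc 0 1)).toReal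

/-- A compatible motion of two discs with radius sum `s` from placement `(A₀,B₀)`
to placement `(A₁,B₁)`. -/
structure IsCompatMotion (s : ℝ) (A₀ B₀ A₁ B₁ : Plane) (ξA ξB : ℝ → Plane) : Prop where
  contA : ContinuousOn ξA (Icc 0 1)
  contB : ContinuousOn ξB (Icc 0 1)
  bvA : BoundedVariationOn ξA (Icc 0 1)
  bvB : BoundedVariationOn ξB (Icc 0 1)
  startA : ξA 0 = A₀
  stopA : ξA 1 = A₁
  startB : ξB 0 = B₀
  stopB : ξB 1 = B₁
  compat : ∀ t ∈ Icc (0:ℝ) 1, s ≤ ‖ξA t - ξB t‖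

/-- A motion is net counter-clockwise: some continuous angle lift `θm` of
`ξA - ξB` realizes every angle `θ₀ + r (mod 2π)` for `r ∈ [0,Δ]`, where
`Δ ∈ [0,2π)` satisfies `θm 1 ≡ θm 0 + Δ (mod 2π)`. -/
def NetCCW (ξA ξB : ℝ → Plane) : Prop :=
  ∃ (θm : ℝ → ℝ) (Δ : ℝ),
    ContinuousOn θm (Icc 0 1) ∧
    (∀ t ∈ Icc (0:ℝ) 1, ξA t - ξB t = ‖ξA t - ξB t‖ • uvec (θm t)) ∧
    0 ≤ Δ ∧ Δ < 2 * π ∧ (∃ k : ℤ, θm 1 = θm 0 + Δ + 2 * π * k) ∧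
    ∀ r ∈ Icc 0 Δ, ∃ t ∈ Icc (0:ℝ) 1, ∃ k : ℤ, θm t = θm 0 + r + 2 * π * k


/-!
For a continuous rectifiable curve `ξ` with trace `C`, the perimeter `∫ h_C` of the convex hull
is at most the length of the closed curve formed by `ξ` and its chord:
`∫₀^{2π} h_C ≤ ℓ(ξ) + ‖ξ 1 - ξ 0‖`. Indeed, in each direction `u(θ)` a fine inscribed closed
polygon runs from (nearly) the maximum `h_C(θ)` to (nearly) the minimum `-h_C(θ + π)` of
`⟪·, u(θ)⟫` on `C` and back, so its projected length is at least twice the width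
`h_C(θ) + h_C(θ + π)`; integrating over `θ` with `∫₀^{2π} |⟪v, u(θ)⟫| dθ = 4‖v‖` gives the bound.
Convexity makes this an equality for `ξA` and `ξB`, so
`ℓ(m) = ∫ (h_{C_A} + h_{C_B}) - ‖A₁ - A₀‖ - ‖B₁ - B₀‖`, and minimality together with the bound
for `ξA'` and `ξB'` yields `ℓ(m) ≤ ℓ(m')`.
-/

@[fun_prop]
lemma continuous_uvec : Continuous uvec := by
  unfold uvec; fun_prop

lemma norm_uvec (θ : ℝ) : ‖uvec θ‖ = 1 := by
  simp [EuclideanSpace.norm_eq, uvec, Fin.sum_univ_two]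

lemma uvec_add_pi (θ : ℝ) : uvec (θ + π) = -uvec θ := by
  ext i
  fin_cases i <;> simp [uvec, cos_add_pi, sin_add_pi]

lemma uvec_periodic : Function.Periodic uvec (2 * π) := by
  intro θ
  ext i
  fin_cases i <;> simp [uvec]

lemma inner_uvec (v : Plane) (θ : ℝ) : ⟪v, uvec θ⟫ = v 0 * cos θ + v 1 * sin θ := by
  simp [uvec, PiLp.inner_apply, Fin.sum_univ_two]
  ring

lemma integral_abs_cos_sub (φ : ℝ) : ∫ θ in (0:ℝ)..(2 * π), |cos (θ - φ)| = 4 := by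
  have hper : Function.Periodic (fun x => |cos x|) (2 * π) := fun x => by simp
  rw [intervalIntegral.integral_comp_sub_right (fun x => |cos x|), zero_sub,
    sub_eq_neg_add, hper.intervalIntegral_add_eq (-φ) (-(π / 2))]
  have hint : ∀ a b : ℝ, IntervalIntegrable (fun x => |cos x|) MeasureTheory.volume a b :=
    fun a b => continuous_cos.abs.intervalIntegrable a b
  rw [← intervalIntegral.integral_add_adjacent_intervals (hint _ (π / 2)) (hint _ _)]
  have hpos : ∫ x in (-(π / 2))..(π / 2), |cos x| = ∫ x in (-(π / 2))..(π / 2), cos x := by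
    refine intervalIntegral.integral_congr fun x hx => abs_of_nonneg (cos_nonneg_of_mem_Icc ?_)
    rwa [uIcc_of_le (by linarith [pi_pos])] at hx
  have hneg : ∫ x in (π / 2)..(-(π / 2) + 2 * π), |cos x|
      = ∫ x in (π / 2)..(-(π / 2) + 2 * π), -cos x := by
    refine intervalIntegral.integral_congr fun x hx => abs_of_nonpos ?_
    rw [uIcc_of_le (by linarith [pi_pos])] at hx
    exact cos_nonpos_of_pi_div_two_le_of_le hx.1 (by linarith [hx.2])
  rw [hpos, hneg, intervalIntegral.integral_neg, integral_cos, integral_cos]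
  norm_num [sin_add_two_pi]

lemma integral_abs_inner_uvec (v : Plane) :
    ∫ θ in (0:ℝ)..(2 * π), |⟪v, uvec θ⟫| = 4 * ‖v‖ := by
  set z : ℂ := ⟨v 0, v 1⟩
  have hz : ‖z‖ = ‖v‖ := by
    simp [Complex.norm_eq_sqrt_sq_add_sq, EuclideanSpace.norm_eq, Fin.sum_univ_two, z]
  have hpolar (θ : ℝ) : |⟪v, uvec θ⟫| = ‖v‖ * |cos (θ - z.arg)| := by
    have h : ⟪v, uvec θ⟫ = ‖v‖ * cos (θ - z.arg) := by
      rw [inner_uvec, cos_sub, ← hz]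
      linear_combination (-cos θ) * Complex.norm_mul_cos_arg z - sin θ * Complex.norm_mul_sin_arg z
    rw [h, abs_mul, abs_norm]
  simp_rw [hpolar, intervalIntegral.integral_const_mul, integral_abs_cos_sub, mul_comm]

lemma integral_sum_abs_inner_uvec {ι : Type*} (s : Finset ι) (v : ι → Plane) :
    ∫ θ in (0:ℝ)..(2 * π), ∑ i ∈ s, |⟪v i, uvec θ⟫| = 4 * ∑ i ∈ s, ‖v i‖ := by
  rw [intervalIntegral.integral_finsetSum fun i _ =>
      ((continuous_const.inner continuous_uvec).abs).intervalIntegrable _ _, Finset.mul_sum]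
  exact Finset.sum_congr rfl fun i _ => integral_abs_inner_uvec (v i)

section SupportFunction

variable {C : Set Plane}

lemma continuous_supp (hC : IsCompact C) : Continuous (supp C) :=
  hC.continuous_sSup (f := fun θ x => ⟪x, uvec θ⟫)
    (continuous_snd.inner (continuous_uvec.comp continuous_fst))

lemma exists_supp_eq_inner (hC : IsCompact C) (hne : C.Nonempty) (θ : ℝ) :
    ∃ x ∈ C, supp C θ = ⟪x, uvec θ⟫ := by
  obtain ⟨x, hx, hsup⟩ := (hC.image (continuous_id.inner continuous_const)).sSup_mem
    (hne.image fun x => ⟪x, uvec θ⟫)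
  exact ⟨x, hx, hsup.symm⟩

lemma supp_periodic : Function.Periodic (supp C) (2 * π) := fun θ => by
  simp only [supp, uvec_periodic θ]

lemma integral_supp_add_supp_add_pi (hC : IsCompact C) :
    ∫ θ in (0:ℝ)..(2 * π), (supp C θ + supp C (θ + π)) = 2 * ∫ θ in (0:ℝ)..(2 * π), supp C θ := by
  have hcont := continuous_supp hC
  have hshift : Continuous fun θ => supp C (θ + π) := hcont.comp (continuous_add_const π)
  rw [intervalIntegral.integral_add (hcont.intervalIntegrable _ _) (hshift.intervalIntegrable _ _),
    intervalIntegral.integral_comp_add_right, zero_add, add_comm (2 * π),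
    supp_periodic.intervalIntegral_add_eq π 0, zero_add, ← two_mul]

end SupportFunction

lemma abs_sub_le_sum_Ico_abs_sub (G : ℕ → ℝ) {m n : ℕ} (hmn : m ≤ n) :
    |G n - G m| ≤ ∑ i ∈ Finset.Ico m n, |G (i + 1) - G i| := by
  simpa [Real.dist_eq, abs_sub_comm] using dist_le_Ico_sum_dist G hmn

lemma two_mul_abs_sub_le_sum_abs_sub (G : ℕ → ℝ) {N p q : ℕ} (hp : p ≤ N) (hq : q ≤ N) :
    2 * |G q - G p| ≤ ∑ i ∈ Finset.range N, |G (i + 1) - G i| + |G N - G 0| := by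
  wlog hpq : p ≤ q generalizing p q
  · rw [abs_sub_comm]; exact this hq hp (le_of_not_ge hpq)
  have hsplit := Finset.sum_Ico_consecutive (fun i => |G (i + 1) - G i|) (Nat.zero_le p)
    (hpq.trans hq)
  rw [← Finset.sum_Ico_consecutive _ hpq hq] at hsplit
  have h₁ := abs_sub_le_sum_Ico_abs_sub G (Nat.zero_le p)
  have h₂ := abs_sub_le_sum_Ico_abs_sub G hpq
  have h₃ := abs_sub_le_sum_Ico_abs_sub G hq
  have h₄ : |G q - G p| ≤ |G p - G 0| + |G N - G 0| + |G N - G q| := by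
    calc |G q - G p| = |(G N - G 0) - (G p - G 0) - (G N - G q)| := by ring_nf
      _ ≤ _ := by
        refine (abs_sub _ _).trans ?_
        gcongr
        exact (abs_sub _ _).trans (by rw [add_comm])
  rw [Finset.range_eq_Ico, ← hsplit]
  linarith

section Curve

variable {ξ : ℝ → Plane}

lemma sum_norm_sub_le_plen (hbv : BoundedVariationOn ξ (Icc 0 1)) (N : ℕ) :
    ∑ i ∈ Finset.range N, ‖ξ ((i + 1 : ℕ) / N) - ξ (i / N)‖ ≤ plen ξ := by
  have hmono : MonotoneOn (fun i : ℕ => (i : ℝ) / N) (Icc 0 N) := fun i _ j _ hij => by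
    dsimp only; gcongr
  have hmem : ∀ i ∈ Icc 0 N, (i : ℝ) / N ∈ Icc (0 : ℝ) 1 := fun i hi =>
    ⟨by positivity, div_le_one_of_le₀ (by exact_mod_cast hi.2) (Nat.cast_nonneg N)⟩
  have hsum := eVariationOn.sum_le_of_monotoneOn_Icc (f := ξ) hmono hmem
  rw [← Finset.range_eq_Ico] at hsum
  calc ∑ i ∈ Finset.range N, ‖ξ ((i + 1 : ℕ) / N) - ξ (i / N)‖
      = (∑ i ∈ Finset.range N, edist (ξ ((i + 1 : ℕ) / N)) (ξ (i / N))).toReal := by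
        rw [ENNReal.toReal_sum fun _ _ => edist_ne_top _ _]
        simp only [← dist_edist, dist_eq_norm]
    _ ≤ plen ξ := ENNReal.toReal_mono hbv hsum

lemma exists_grid_dist_lt (hc : ContinuousOn ξ (Icc 0 1)) {ε : ℝ} (hε : 0 < ε) :
    ∃ N : ℕ, 0 < N ∧ ∀ t ∈ Icc (0 : ℝ) 1, ∃ p ≤ N, ‖ξ t - ξ (p / N)‖ < ε := by
  obtain ⟨δ, hδ, hξ⟩ := Metric.uniformContinuousOn_iff.mp
    (isCompact_Icc.uniformContinuousOn_of_continuous hc) ε hε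
  obtain ⟨N, hN⟩ := exists_nat_gt (1 / δ)
  have hNpos : (0 : ℝ) < N := (one_div_pos.mpr hδ).trans hN
  refine ⟨N, by exact_mod_cast hNpos, fun t ht => ⟨⌊N * t⌋₊, ?_, ?_⟩⟩
  · exact_mod_cast (Nat.floor_le_floor (mul_le_of_le_one_right hNpos.le ht.2)).trans
      (Nat.floor_natCast N).le
  have hfl : (⌊N * t⌋₊ : ℝ) ≤ N * t := Nat.floor_le (mul_nonneg hNpos.le ht.1)
  have hlt : N * t < ⌊N * t⌋₊ + 1 := Nat.lt_floor_add_one _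
  have hgrid : (⌊N * t⌋₊ : ℝ) / N ∈ Icc (0 : ℝ) 1 :=
    ⟨by positivity, (div_le_one hNpos).mpr (hfl.trans (mul_le_of_le_one_right hNpos.le ht.2))⟩
  rw [← dist_eq_norm]
  refine hξ t ht _ hgrid ?_
  rw [Real.dist_eq, abs_of_nonneg (sub_nonneg.mpr ((div_le_iff₀' hNpos).mpr hfl))]
  have hNδ : 1 < N * δ := by
    simpa [inv_mul_cancel₀ hδ.ne'] using mul_lt_mul_of_pos_right hN hδ
  rw [show t - ⌊N * t⌋₊ / N = (N * t - ⌊N * t⌋₊) / N by field_simp, div_lt_iff₀ hNpos]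
  linarith

lemma two_mul_supp_add_supp_add_pi_le (hc : ContinuousOn ξ (Icc 0 1)) {N : ℕ} (hN : 0 < N)
    {ε : ℝ} (hgrid : ∀ t ∈ Icc (0 : ℝ) 1, ∃ p ≤ N, ‖ξ t - ξ (p / N)‖ < ε) (θ : ℝ) :
    2 * (supp (ξ '' Icc 0 1) θ + supp (ξ '' Icc 0 1) (θ + π)) ≤
      ∑ i ∈ Finset.range N, |⟪ξ ((i + 1 : ℕ) / N) - ξ (i / N), uvec θ⟫|
        + |⟪ξ 1 - ξ 0, uvec θ⟫| + 4 * ε := by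
  set G : ℕ → ℝ := fun i => ⟪ξ (i / N), uvec θ⟫
  have hnear : ∀ t ∈ Icc (0 : ℝ) 1, ∃ p ≤ N, |⟪ξ t, uvec θ⟫ - G p| < ε := by
    intro t ht
    obtain ⟨p, hp, hdist⟩ := hgrid t ht
    refine ⟨p, hp, ?_⟩
    rw [← inner_sub_left]
    exact (abs_real_inner_le_norm _ _).trans_lt (by rwa [norm_uvec, mul_one])
  have hC := isCompact_Icc.image_of_continuousOn hc
  have hne := (nonempty_Icc.mpr zero_le_one).image ξ
  obtain ⟨_, ⟨tM, htM, rfl⟩, hmax⟩ := exists_supp_eq_inner hC hne θ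
  obtain ⟨_, ⟨tm, htm, rfl⟩, hmin⟩ := exists_supp_eq_inner hC hne (θ + π)
  rw [uvec_add_pi, inner_neg_right] at hmin
  obtain ⟨p, hp, hpM⟩ := hnear tM htM
  obtain ⟨q, hq, hqm⟩ := hnear tm htm
  have hpoly := two_mul_abs_sub_le_sum_abs_sub G hq hp
  have hchord : ⟪ξ 1 - ξ 0, uvec θ⟫ = G N - G 0 := by
    simp [G, inner_sub_left, hN.ne']
  simp only [inner_sub_left, hchord]
  rw [abs_lt] at hpM hqm
  linarith [le_abs_self (G p - G q)]

theorem integral_supp_image_le (hc : ContinuousOn ξ (Icc 0 1))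
    (hbv : BoundedVariationOn ξ (Icc 0 1)) :
    ∫ θ in (0:ℝ)..(2 * π), supp (ξ '' Icc 0 1) θ ≤ plen ξ + ‖ξ 1 - ξ 0‖ := by
  have hC := isCompact_Icc.image_of_continuousOn hc
  have hsupp := continuous_supp hC
  refine le_of_forall_pos_le_add fun ε hε => ?_
  set δ := ε / (2 * π)
  obtain ⟨N, hN, hgrid⟩ := exists_grid_dist_lt hc (by positivity : 0 < δ)
  set Δ : ℕ → Plane := fun i => ξ ((i + 1 : ℕ) / N) - ξ (i / N)
  have hsum : Continuous fun θ => ∑ i ∈ Finset.range N, |⟪Δ i, uvec θ⟫| := by fun_prop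
  have hchord : Continuous fun θ => |⟪ξ 1 - ξ 0, uvec θ⟫| := by fun_prop
  have hpolygon_cont : Continuous fun θ =>
      ∑ i ∈ Finset.range N, |⟪Δ i, uvec θ⟫| + |⟪ξ 1 - ξ 0, uvec θ⟫| := by fun_prop
  have hpolygon : ∫ θ in (0:ℝ)..(2 * π), (∑ i ∈ Finset.range N, |⟪Δ i, uvec θ⟫|
      + |⟪ξ 1 - ξ 0, uvec θ⟫| + 4 * δ) =
        4 * ∑ i ∈ Finset.range N, ‖Δ i‖ + 4 * ‖ξ 1 - ξ 0‖ + 4 * ε := by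
    rw [intervalIntegral.integral_add (hpolygon_cont.intervalIntegrable _ _)
        intervalIntegrable_const, intervalIntegral.integral_add (hsum.intervalIntegrable _ _)
        (hchord.intervalIntegrable _ _), integral_sum_abs_inner_uvec, integral_abs_inner_uvec,
      intervalIntegral.integral_const, smul_eq_mul, sub_zero]
    linear_combination 4 * (mul_div_cancel₀ ε (by positivity : 2 * π ≠ 0))
  have hwidth := intervalIntegral.integral_mono_on (μ := MeasureTheory.volume) (a := 0) (b := 2 * π)
    (f := fun θ => 2 * (supp (ξ '' Icc 0 1) θ + supp (ξ '' Icc 0 1) (θ + π)))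
    (g := fun θ => ∑ i ∈ Finset.range N, |⟪Δ i, uvec θ⟫| + |⟪ξ 1 - ξ 0, uvec θ⟫| + 4 * δ)
    (by positivity) (Continuous.intervalIntegrable (by fun_prop) _ _)
    (Continuous.intervalIntegrable (by fun_prop) _ _)
    fun θ _ => two_mul_supp_add_supp_add_pi_le hc hN hgrid θ
  rw [intervalIntegral.integral_const_mul, integral_supp_add_supp_add_pi hC, hpolygon] at hwidth
  linarith [sum_norm_sub_le_plen hbv N]

lemma integral_supp_image_add {η : ℝ → Plane} (hξ : ContinuousOn ξ (Icc 0 1))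
    (hη : ContinuousOn η (Icc 0 1)) :
    ∫ θ in (0:ℝ)..(2 * π), (supp (ξ '' Icc 0 1) θ + supp (η '' Icc 0 1) θ) =
      (∫ θ in (0:ℝ)..(2 * π), supp (ξ '' Icc 0 1) θ) +
        ∫ θ in (0:ℝ)..(2 * π), supp (η '' Icc 0 1) θ :=
  intervalIntegral.integral_add
    ((continuous_supp (isCompact_Icc.image_of_continuousOn hξ)).intervalIntegrable _ _)
    ((continuous_supp (isCompact_Icc.image_of_continuousOn hη)).intervalIntegrable _ _)

end Curve

theorem optimal_of_convex_and_minimal_general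
    (s : ℝ) (A₀ B₀ A₁ B₁ : Plane) (ξA ξB : ℝ → Plane)
    (hm : IsCompatMotion s A₀ B₀ A₁ B₁ ξA ξB)
    (hconvA : plen ξA = (∫ θ in (0:ℝ)..(2 * π), supp (ξA '' Icc 0 1) θ) - ‖A₁ - A₀‖)
    (hconvB : plen ξB = (∫ θ in (0:ℝ)..(2 * π), supp (ξB '' Icc 0 1) θ) - ‖B₁ - B₀‖)
    (hmin : ∀ ξA' ξB' : ℝ → Plane, IsCompatMotion s A₀ B₀ A₁ B₁ ξA' ξB' →
      NetCCW ξA' ξB' →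
      (∫ θ in (0:ℝ)..(2 * π), (supp (ξA '' Icc 0 1) θ + supp (ξB '' Icc 0 1) θ)) ≤
      (∫ θ in (0:ℝ)..(2 * π), (supp (ξA' '' Icc 0 1) θ + supp (ξB' '' Icc 0 1) θ))) :
    ∀ ξA' ξB' : ℝ → Plane, IsCompatMotion s A₀ B₀ A₁ B₁ ξA' ξB' → NetCCW ξA' ξB' →
      plen ξA + plen ξB ≤ plen ξA' + plen ξB' := by
  intro ξA' ξB' hm' hccw'
  have hA' := integral_supp_image_le hm'.contA hm'.bvA
  have hB' := integral_supp_image_le hm'.contB hm'.bvB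
  rw [hm'.stopA, hm'.startA] at hA'
  rw [hm'.stopB, hm'.startB] at hB'
  have hmin' := hmin ξA' ξB' hm' hccw'
  rw [integral_supp_image_add hm.contA hm.contB,
    integral_supp_image_add hm'.contA hm'.contB] at hmin'
  linarith

/-- Lemma: sufficient conditions for optimality among net
counter-clockwise motions: a compatible net counter-clockwise motion that is
convex (its trajectory lengths equal the convex-hull perimeters minus the chord
lengths, via Cauchy's formula) and minimizes the sum of the support-function
integrals over all compatible net counter-clockwise motions is a shortest
compatible net counter-clockwise motion. -/
theorem optimal_of_convex_and_minimal
    (s : ℝ) (hs : 0 < s) (A₀ B₀ A₁ B₁ : Plane) (ξA ξB : ℝ → Plane)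
    (hm : IsCompatMotion s A₀ B₀ A₁ B₁ ξA ξB)
    (hccw : NetCCW ξA ξB)
    (hconvA : plen ξA = (∫ θ in (0:ℝ)..(2 * π), supp (ξA '' Icc 0 1) θ) - ‖A₁ - A₀‖)
    (hconvB : plen ξB = (∫ θ in (0:ℝ)..(2 * π), supp (ξB '' Icc 0 1) θ) - ‖B₁ - B₀‖)
    (hmin : ∀ ξA' ξB' : ℝ → Plane, IsCompatMotion s A₀ B₀ A₁ B₁ ξA' ξB' →
      NetCCW ξA' ξB' →
      (∫ θ in (0:ℝ)..(2 * π), (supp (ξA '' Icc 0 1) θ + supp (ξB '' Icc 0 1) θ)) ≤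
      (∫ θ in (0:ℝ)..(2 * π), (supp (ξA' '' Icc 0 1) θ + supp (ξB' '' Icc 0 1) θ))) :
    ∀ ξA' ξB' : ℝ → Plane, IsCompatMotion s A₀ B₀ A₁ B₁ ξA' ξB' → NetCCW ξA' ξB' →
      plen ξA + plen ξB ≤ plen ξA' + plen ξB' :=
  optimal_of_convex_and_minimal_general s A₀ B₀ A₁ B₁ ξA ξB hm hconvA hconvB hmin
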